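/- arXiv:1603.09091 — 4 statements merged into one kernel-verified Lean document; each statement's English description precedes it below -/
import Mathlib

section
/- Let n ∈ ℝ³ be a unit vector and define on Cl(ℂ³) the projections N⁺f = ½(f + n·f̂·n) and S⁻f = ½(1−n)·f. Then the ranges of N⁺ and S⁻ intersect trivially: if N⁺f = f and S⁻f = f then f = 0. -/
noncomputable section

/-- Complex Euclidean dot product (bilinear extension) on `ℂ³`. -/
def cdot (u v : Fin 3 → ℂ) : ℂ := u 0 * v 0 + u 1 * v 1 + u 2 * v 2

/-- Bilinear extension of the cross product to `ℂ³`. -/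
def ccross (u v : Fin 3 → ℂ) : Fin 3 → ℂ :=
  ![u 1 * v 2 - u 2 * v 1, u 2 * v 0 - u 0 * v 2, u 0 * v 1 - u 1 * v 0]

/-- The eight-dimensional complex Clifford algebra `Cl(ℂ³)` of `ℝ³`, identified
as a linear space with `∧ℂ³`: a multivector is `w = α + a + *b + *β` with
scalar part `α`, vector part `a`, bivector part `*b` and 3-vector part `*β`. -/
structure Cl3 where
  α : ℂ
  a : Fin 3 → ℂ
  b : Fin 3 → ℂ
  β : ℂ

instance : Zero Cl3 := ⟨⟨0, 0, 0, 0⟩⟩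
instance : One Cl3 := ⟨⟨1, 0, 0, 0⟩⟩
instance : Add Cl3 := ⟨fun x y => ⟨x.α + y.α, x.a + y.a, x.b + y.b, x.β + y.β⟩⟩
instance : Neg Cl3 := ⟨fun x => ⟨-x.α, -x.a, -x.b, -x.β⟩⟩
instance : Sub Cl3 := ⟨fun x y => x + -y⟩
instance : SMul ℂ Cl3 := ⟨fun c x => ⟨c * x.α, c • x.a, c • x.b, c * x.β⟩⟩

/-- The Clifford product on `∧ℂ³`, with the convention `u u = |u|²` for
vectors `u`.  It is determined by the product of a vector with a multivector,
`u w = u·a + (uα − u×b) + *(u×a + uβ) + *(u·b)` for `w = α + a + *b + *β`. -/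
instance : Mul Cl3 := ⟨fun x y =>
  ⟨x.α * y.α + cdot x.a y.a - cdot x.b y.b - x.β * y.β,
   x.α • y.a + y.α • x.a - ccross x.a y.b - ccross x.b y.a - y.β • x.b - x.β • y.b,
   x.α • y.b + y.α • x.b + ccross x.a y.a - ccross x.b y.b + x.β • y.a + y.β • x.a,
   x.α * y.β + x.β * y.α + cdot x.a y.b + cdot x.b y.a⟩⟩

/-- The embedding of real vectors `ℝ³ ⊂ Cl(ℂ³)`. -/
def vec (u : Fin 3 → ℝ) : Cl3 := ⟨0, fun i => (u i : ℂ), 0, 0⟩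

/-- The grade involution `ŵ`: negation of the vector (degree-1) and 3-vector
(degree-3) parts. -/
def gradeInv (w : Cl3) : Cl3 := ⟨w.α, -w.a, w.b, -w.β⟩

/-- Exterior product of a complex vector with a multivector:
`u ∧ w = uα + *(u×a) + *(u·b)` for `w = α + a + *b + *β`. -/
def wedgeC (u : Fin 3 → ℂ) (w : Cl3) : Cl3 := ⟨0, w.α • u, ccross u w.a, cdot u w.b⟩

/-- Exterior product of a real vector with a multivector. -/
def wedgeVec (u : Fin 3 → ℝ) (w : Cl3) : Cl3 := wedgeC (fun i => (u i : ℂ)) w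

/-- The reflection operator `N f = n f̂ n` (Clifford products). -/
def Nop (n : Fin 3 → ℝ) (f : Cl3) : Cl3 := vec n * gradeInv f * vec n

/-- The reflection operator `S f = n f` (Clifford product). -/
def Sop (n : Fin 3 → ℝ) (f : Cl3) : Cl3 := vec n * f

namespace Cl3Aux

lemma mul_α (x y : Cl3) : (x*y).α = x.α * y.α + (x.a 0 * y.a 0 + x.a 1 * y.a 1 + x.a 2 * y.a 2) - (x.b 0 * y.b 0 + x.b 1 * y.b 1 + x.b 2 * y.b 2) - x.β * y.β := rfl
lemma mul_β (x y : Cl3) : (x*y).β = x.α * y.β + x.β * y.α + (x.a 0 * y.b 0 + x.a 1 * y.b 1 + x.a 2 * y.b 2) + (x.b 0 * y.a 0 + x.b 1 * y.a 1 + x.b 2 * y.a 2) := rfl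
lemma mul_a0 (x y : Cl3) : (x*y).a 0 = x.α * y.a 0 + y.α * x.a 0 - (x.a 1 * y.b 2 - x.a 2 * y.b 1) - (x.b 1 * y.a 2 - x.b 2 * y.a 1) - y.β * x.b 0 - x.β * y.b 0 := rfl
lemma mul_a1 (x y : Cl3) : (x*y).a 1 = x.α * y.a 1 + y.α * x.a 1 - (x.a 2 * y.b 0 - x.a 0 * y.b 2) - (x.b 2 * y.a 0 - x.b 0 * y.a 2) - y.β * x.b 1 - x.β * y.b 1 := rfl
lemma mul_a2 (x y : Cl3) : (x*y).a 2 = x.α * y.a 2 + y.α * x.a 2 - (x.a 0 * y.b 1 - x.a 1 * y.b 0) - (x.b 0 * y.a 1 - x.b 1 * y.a 0) - y.β * x.b 2 - x.β * y.b 2 := rfl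
lemma mul_b0 (x y : Cl3) : (x*y).b 0 = x.α * y.b 0 + y.α * x.b 0 + (x.a 1 * y.a 2 - x.a 2 * y.a 1) - (x.b 1 * y.b 2 - x.b 2 * y.b 1) + x.β * y.a 0 + y.β * x.a 0 := rfl
lemma mul_b1 (x y : Cl3) : (x*y).b 1 = x.α * y.b 1 + y.α * x.b 1 + (x.a 2 * y.a 0 - x.a 0 * y.a 2) - (x.b 2 * y.b 0 - x.b 0 * y.b 2) + x.β * y.a 1 + y.β * x.a 1 := rfl
lemma mul_b2 (x y : Cl3) : (x*y).b 2 = x.α * y.b 2 + y.α * x.b 2 + (x.a 0 * y.a 1 - x.a 1 * y.a 0) - (x.b 0 * y.b 1 - x.b 1 * y.b 0) + x.β * y.a 2 + y.β * x.a 2 := rfl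

lemma add_α (x y : Cl3) : (x+y).α = x.α + y.α := rfl
lemma add_a (x y : Cl3) (i : Fin 3) : (x+y).a i = x.a i + y.a i := rfl
lemma add_b (x y : Cl3) (i : Fin 3) : (x+y).b i = x.b i + y.b i := rfl
lemma add_β (x y : Cl3) : (x+y).β = x.β + y.β := rfl
lemma neg_α (x : Cl3) : (-x).α = -x.α := rfl
lemma neg_a (x : Cl3) (i : Fin 3) : (-x).a i = -x.a i := rfl
lemma neg_b (x : Cl3) (i : Fin 3) : (-x).b i = -x.b i := rfl
lemma neg_β (x : Cl3) : (-x).β = -x.β := rfl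
lemma sub_α (x y : Cl3) : (x-y).α = x.α + -y.α := rfl
lemma sub_a (x y : Cl3) (i : Fin 3) : (x-y).a i = x.a i + -y.a i := rfl
lemma sub_b (x y : Cl3) (i : Fin 3) : (x-y).b i = x.b i + -y.b i := rfl
lemma sub_β (x y : Cl3) : (x-y).β = x.β + -y.β := rfl
lemma smul_α (c : ℂ) (x : Cl3) : (c • x).α = c * x.α := rfl
lemma smul_a (c : ℂ) (x : Cl3) (i : Fin 3) : (c • x).a i = c * x.a i := rfl
lemma smul_b (c : ℂ) (x : Cl3) (i : Fin 3) : (c • x).b i = c * x.b i := rfl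
lemma smul_β (c : ℂ) (x : Cl3) : (c • x).β = c * x.β := rfl
lemma one_α : (1 : Cl3).α = 1 := rfl
lemma one_a (i : Fin 3) : (1 : Cl3).a i = 0 := rfl
lemma one_b (i : Fin 3) : (1 : Cl3).b i = 0 := rfl
lemma one_β : (1 : Cl3).β = 0 := rfl
lemma vec_α (u : Fin 3 → ℝ) : (vec u).α = 0 := rfl
lemma vec_a (u : Fin 3 → ℝ) (i : Fin 3) : (vec u).a i = (u i : ℂ) := rfl
lemma vec_b (u : Fin 3 → ℝ) (i : Fin 3) : (vec u).b i = 0 := rfl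
lemma vec_β (u : Fin 3 → ℝ) : (vec u).β = 0 := rfl
lemma gi_α (x : Cl3) : (gradeInv x).α = x.α := rfl
lemma gi_a (x : Cl3) (i : Fin 3) : (gradeInv x).a i = -x.a i := rfl
lemma gi_b (x : Cl3) (i : Fin 3) : (gradeInv x).b i = x.b i := rfl
lemma gi_β (x : Cl3) : (gradeInv x).β = -x.β := rfl
lemma zero_α : (0 : Cl3).α = 0 := rfl
lemma zero_a (i : Fin 3) : (0 : Cl3).a i = 0 := rfl
lemma zero_b (i : Fin 3) : (0 : Cl3).b i = 0 := rfl
lemma zero_β : (0 : Cl3).β = 0 := rfl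

lemma ext' {x y : Cl3} (h1 : x.α = y.α) (h2 : x.a 0 = y.a 0) (h3 : x.a 1 = y.a 1)
    (h4 : x.a 2 = y.a 2) (h5 : x.b 0 = y.b 0) (h6 : x.b 1 = y.b 1) (h7 : x.b 2 = y.b 2)
    (h8 : x.β = y.β) : x = y := by
  cases x; cases y
  simp only [Cl3.mk.injEq] at *
  refine ⟨h1, funext fun i => ?_, funext fun i => ?_, h8⟩ <;>
    fin_cases i <;> assumption

lemma mul_assoc' (x y z : Cl3) : x * y * z = x * (y * z) := by
  refine ext' ?_ ?_ ?_ ?_ ?_ ?_ ?_ ?_ <;>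
    simp only [mul_α, mul_β, mul_a0, mul_a1, mul_a2, mul_b0, mul_b1, mul_b2] <;> ring

end Cl3Aux

open Cl3Aux

/-- For a unit vector `n ∈ ℝ³`, the ranges of the projections
`N⁺f = ½(f + n f̂ n)` and `S⁻f = ½(1−n) f` intersect trivially:
if `N⁺f = f` and `S⁻f = f` then `f = 0`. -/
theorem Nplus_Sminus_trivial_intersection (n : Fin 3 → ℝ)
    (hn : n 0 ^ 2 + n 1 ^ 2 + n 2 ^ 2 = 1) (f : Cl3)
    (hNf : (1 / 2 : ℂ) • (f + Nop n f) = f)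
    (hSf : (1 / 2 : ℂ) • ((1 - vec n) * f) = f) :
    f = 0 := by
  -- Step 1: vec n * f = -f
  have hS : vec n * f = -f := by
    have h1 := congrArg Cl3.α hSf
    have h2 := congrArg (fun w => Cl3.a w 0) hSf
    have h3 := congrArg (fun w => Cl3.a w 1) hSf
    have h4 := congrArg (fun w => Cl3.a w 2) hSf
    have h5 := congrArg (fun w => Cl3.b w 0) hSf
    have h6 := congrArg (fun w => Cl3.b w 1) hSf
    have h7 := congrArg (fun w => Cl3.b w 2) hSf
    have h8 := congrArg Cl3.β hSf
    simp only [smul_α, smul_a, smul_b, smul_β, mul_α, mul_β, mul_a0, mul_a1, mul_a2,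
      mul_b0, mul_b1, mul_b2, sub_α, sub_a, sub_b, sub_β, one_α, one_a, one_b, one_β,
      neg_α, neg_a, neg_b, neg_β, vec_α, vec_a, vec_b, vec_β] at h1 h2 h3 h4 h5 h6 h7 h8
    refine ext' ?_ ?_ ?_ ?_ ?_ ?_ ?_ ?_ <;>
      simp only [mul_α, mul_β, mul_a0, mul_a1, mul_a2, mul_b0, mul_b1, mul_b2,
        neg_α, neg_a, neg_b, neg_β, vec_α, vec_a, vec_b, vec_β]
    · linear_combination -2 * h1
    · linear_combination -2 * h2
    · linear_combination -2 * h3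
    · linear_combination -2 * h4
    · linear_combination -2 * h5
    · linear_combination -2 * h6
    · linear_combination -2 * h7
    · linear_combination -2 * h8
  -- Step 2: vec n * gradeInv f = gradeInv f
  have hg : vec n * gradeInv f = gradeInv f := by
    have h1 := congrArg Cl3.α hS
    have h2 := congrArg (fun w => Cl3.a w 0) hS
    have h3 := congrArg (fun w => Cl3.a w 1) hS
    have h4 := congrArg (fun w => Cl3.a w 2) hS
    have h5 := congrArg (fun w => Cl3.b w 0) hS
    have h6 := congrArg (fun w => Cl3.b w 1) hS
    have h7 := congrArg (fun w => Cl3.b w 2) hS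
    have h8 := congrArg Cl3.β hS
    simp only [mul_α, mul_β, mul_a0, mul_a1, mul_a2, mul_b0, mul_b1, mul_b2,
      neg_α, neg_a, neg_b, neg_β, vec_α, vec_a, vec_b, vec_β] at h1 h2 h3 h4 h5 h6 h7 h8
    refine ext' ?_ ?_ ?_ ?_ ?_ ?_ ?_ ?_ <;>
      simp only [mul_α, mul_β, mul_a0, mul_a1, mul_a2, mul_b0, mul_b1, mul_b2,
        gi_α, gi_a, gi_b, gi_β, vec_α, vec_a, vec_b, vec_β]
    · linear_combination -h1
    · linear_combination h2
    · linear_combination h3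
    · linear_combination h4
    · linear_combination -h5
    · linear_combination -h6
    · linear_combination -h7
    · linear_combination h8
  -- Step 3: Nop n f = f
  have hN : Nop n f = f := by
    have h1 := congrArg Cl3.α hNf
    have h2 := congrArg (fun w => Cl3.a w 0) hNf
    have h3 := congrArg (fun w => Cl3.a w 1) hNf
    have h4 := congrArg (fun w => Cl3.a w 2) hNf
    have h5 := congrArg (fun w => Cl3.b w 0) hNf
    have h6 := congrArg (fun w => Cl3.b w 1) hNf
    have h7 := congrArg (fun w => Cl3.b w 2) hNf
    have h8 := congrArg Cl3.β hNf
    simp only [smul_α, smul_a, smul_b, smul_β, add_α, add_a, add_b, add_β] at h1 h2 h3 h4 h5 h6 h7 h8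
    refine ext' ?_ ?_ ?_ ?_ ?_ ?_ ?_ ?_
    · linear_combination 2 * h1
    · linear_combination 2 * h2
    · linear_combination 2 * h3
    · linear_combination 2 * h4
    · linear_combination 2 * h5
    · linear_combination 2 * h6
    · linear_combination 2 * h7
    · linear_combination 2 * h8
  -- Step 4: combine
  have hN' : gradeInv f * vec n = f := by
    have : Nop n f = vec n * gradeInv f * vec n := rfl
    rw [this, hg] at hN
    exact hN
  have key : f = -f := by
    calc f = gradeInv f * vec n := hN'.symm
    _ = (vec n * gradeInv f) * vec n := by rw [hg]
    _ = vec n * (gradeInv f * vec n) := Cl3Aux.mul_assoc' _ _ _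
    _ = vec n * f := by rw [hN']
    _ = -f := hS
  have h1 := congrArg Cl3.α key
  have h2 := congrArg (fun w => Cl3.a w 0) key
  have h3 := congrArg (fun w => Cl3.a w 1) key
  have h4 := congrArg (fun w => Cl3.a w 2) key
  have h5 := congrArg (fun w => Cl3.b w 0) key
  have h6 := congrArg (fun w => Cl3.b w 1) key
  have h7 := congrArg (fun w => Cl3.b w 2) key
  have h8 := congrArg Cl3.β key
  simp only [neg_α, neg_a, neg_b, neg_β] at h1 h2 h3 h4 h5 h6 h7 h8
  refine ext' ?_ ?_ ?_ ?_ ?_ ?_ ?_ ?_ <;>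
    simp only [zero_α, zero_a, zero_b, zero_β]
  · linear_combination h1 / 2
  · linear_combination h2 / 2
  · linear_combination h3 / 2
  · linear_combination h4 / 2
  · linear_combination h5 / 2
  · linear_combination h6 / 2
  · linear_combination h7 / 2
  · linear_combination h8 / 2
end
end

section
/- For a unit vector n ∈ ℝ³, the map N⁺f = ½(f + n·f̂·n) on Cl(ℂ³) satisfies N⁺f = n·(n ∧ f), where n ∧ f is the exterior product; in particular, N⁺ is the projection onto the 'tangential' part of f relative to n. -/
noncomputable section

lemma Cl3.mul_def (x y : Cl3) : x * y =
  ⟨x.α * y.α + cdot x.a y.a - cdot x.b y.b - x.β * y.β,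
   x.α • y.a + y.α • x.a - ccross x.a y.b - ccross x.b y.a - y.β • x.b - x.β • y.b,
   x.α • y.b + y.α • x.b + ccross x.a y.a - ccross x.b y.b + x.β • y.a + y.β • x.a,
   x.α * y.β + x.β * y.α + cdot x.a y.b + cdot x.b y.a⟩ := rfl

lemma Cl3.add_def (x y : Cl3) : x + y = ⟨x.α + y.α, x.a + y.a, x.b + y.b, x.β + y.β⟩ := rfl

set_option maxHeartbeats 1000000

lemma Cl3.smul_def (c : ℂ) (x : Cl3) : c • x = ⟨c * x.α, c • x.a, c • x.b, c * x.β⟩ := rfl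

/-- For a unit vector `n ∈ ℝ³`, `N⁺f = ½(f + n f̂ n) = n (n ∧ f)`;
in particular `N⁺` is the projection onto the tangential part of `f`
relative to `n`. -/
theorem Nplus_eq_n_wedge (n : Fin 3 → ℝ)
    (hn : n 0 ^ 2 + n 1 ^ 2 + n 2 ^ 2 = 1) (f : Cl3) :
    (1 / 2 : ℂ) • (f + Nop n f) = vec n * wedgeVec n f := by
  have hn' : (n 0 : ℂ) ^ 2 + (n 1 : ℂ) ^ 2 + (n 2 : ℂ) ^ 2 = 1 := by
    exact_mod_cast congrArg (Complex.ofReal ·) hn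
  obtain ⟨α, a, b, β⟩ := f
  simp only [Nop, vec, gradeInv, wedgeVec, wedgeC, cdot, ccross, Cl3.mul_def, Cl3.add_def,
    Cl3.smul_def, Cl3.mk.injEq, Matrix.cons_val_zero, Matrix.cons_val_one, Matrix.head_cons,
    Matrix.cons_val_two, Matrix.tail_cons]
  refine ⟨?_, ?_, ?_, ?_⟩
  · simp only [Pi.zero_apply, Pi.neg_apply, Pi.add_apply, Pi.sub_apply, Pi.smul_apply,
      smul_eq_mul, Matrix.cons_val_zero, Matrix.cons_val_one, Matrix.head_cons,
      Matrix.cons_val_two, Matrix.tail_cons]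
    first
    | ring1
    | linear_combination (α/2) * hn'
    | linear_combination (-α/2) * hn'
    | linear_combination α * hn'
    | linear_combination (-α) * hn'
  · funext i
    fin_cases i <;>
    · simp [Matrix.vecHead, Matrix.vecTail]
      ring_nf
      try simp only [Matrix.vecHead, Matrix.vecTail, Function.comp_apply, Pi.smul_apply,
        smul_eq_mul, Fin.succ_zero_eq_one, Fin.succ_one_eq_two]
      try ring_nf
      first
      | ring1
      | linear_combination (a 0/2) * hn'
      | linear_combination (-(a 0)/2) * hn'
      | linear_combination (a 1/2) * hn'
      | linear_combination (-(a 1)/2) * hn'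
      | linear_combination (a 2/2) * hn'
      | linear_combination (-(a 2)/2) * hn'
      | linear_combination (a 0) * hn'
      | linear_combination (-(a 0)) * hn'
      | linear_combination (a 1) * hn'
      | linear_combination (-(a 1)) * hn'
      | linear_combination (a 2) * hn'
      | linear_combination (-(a 2)) * hn'
  · funext i
    fin_cases i <;>
    · simp [Matrix.vecHead, Matrix.vecTail]
      ring_nf
      try simp only [Matrix.vecHead, Matrix.vecTail, Function.comp_apply, Pi.smul_apply,
        smul_eq_mul, Fin.succ_zero_eq_one, Fin.succ_one_eq_two]
      try ring_nf
      first
      | ring1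
      | linear_combination (b 0/2) * hn'
      | linear_combination (-(b 0)/2) * hn'
      | linear_combination (b 1/2) * hn'
      | linear_combination (-(b 1)/2) * hn'
      | linear_combination (b 2/2) * hn'
      | linear_combination (-(b 2)/2) * hn'
      | linear_combination (b 0) * hn'
      | linear_combination (-(b 0)) * hn'
      | linear_combination (b 1) * hn'
      | linear_combination (-(b 1)) * hn'
      | linear_combination (b 2) * hn'
      | linear_combination (-(b 2)) * hn'
  · simp only [Pi.zero_apply, Pi.neg_apply, Pi.add_apply, Pi.sub_apply, Pi.smul_apply,
      smul_eq_mul, Matrix.cons_val_zero, Matrix.cons_val_one, Matrix.head_cons,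
      Matrix.cons_val_two, Matrix.tail_cons]
    first
    | ring1
    | linear_combination (β/2) * hn'
    | linear_combination (-β/2) * hn'
    | linear_combination β * hn'
    | linear_combination (-β) * hn'
end
end

section
/- Let u : Ω → ℂ be a C² function on an open set Ω ⊆ ℝ³ and k ∈ ℂ. Define the Clifford-algebra-valued field F = iku + ∇u (scalar part iku, vector part ∇u, zero bivector and 3-vector parts). Then DF = ikF (where D is the Hodge–Dirac operator, nabla acting via Clifford multiplication) if and only if Δu + k²u = 0. -/
noncomputable section

/-- Partial derivative `∂ᵢ f` of a complex-valued function on `ℝ³`. -/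
def pdC (i : Fin 3) (f : (Fin 3 → ℝ) → ℂ) (x : Fin 3 → ℝ) : ℂ :=
  fderiv ℝ f x (Pi.single i 1)

/-- Componentwise partial derivative `∂ᵢ F` of a multivector field. -/
def pdCl (i : Fin 3) (F : (Fin 3 → ℝ) → Cl3) (x : Fin 3 → ℝ) : Cl3 :=
  ⟨pdC i (fun y => (F y).α) x, fun j => pdC i (fun y => (F y).a j) x,
   fun j => pdC i (fun y => (F y).b j) x, pdC i (fun y => (F y).β) x⟩

/-- The standard basis vector `eᵢ` of `ℝ³`. -/
def basisVec (i : Fin 3) : Fin 3 → ℝ := Pi.single i 1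

/-- The Hodge–Dirac operator `D F = e₁ ∂₁F + e₂ ∂₂F + e₃ ∂₃F`, the nabla
symbol acting via the Clifford product. -/
def Dirac (F : (Fin 3 → ℝ) → Cl3) (x : Fin 3 → ℝ) : Cl3 :=
  vec (basisVec 0) * pdCl 0 F x + vec (basisVec 1) * pdCl 1 F x
    + vec (basisVec 2) * pdCl 2 F x

/-- The exterior derivative `d F = e₁ ∧ ∂₁F + e₂ ∧ ∂₂F + e₃ ∧ ∂₃F`, the nabla
symbol acting via the exterior product. -/
def extDerivCl (F : (Fin 3 → ℝ) → Cl3) (x : Fin 3 → ℝ) : Cl3 :=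
  wedgeVec (basisVec 0) (pdCl 0 F x) + wedgeVec (basisVec 1) (pdCl 1 F x)
    + wedgeVec (basisVec 2) (pdCl 2 F x)

/-- Divergence `∇·v` of a complex vector field on `ℝ³`. -/
def divC (v : (Fin 3 → ℝ) → Fin 3 → ℂ) (x : Fin 3 → ℝ) : ℂ :=
  pdC 0 (fun y => v y 0) x + pdC 1 (fun y => v y 1) x + pdC 2 (fun y => v y 2) x

/-- Curl `∇×v` of a complex vector field on `ℝ³`. -/
def curlC (v : (Fin 3 → ℝ) → Fin 3 → ℂ) (x : Fin 3 → ℝ) : Fin 3 → ℂ :=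
  ![pdC 1 (fun y => v y 2) x - pdC 2 (fun y => v y 1) x,
    pdC 2 (fun y => v y 0) x - pdC 0 (fun y => v y 2) x,
    pdC 0 (fun y => v y 1) x - pdC 1 (fun y => v y 0) x]

/-- Gradient `∇f` of a complex-valued function on `ℝ³`. -/
def gradC (f : (Fin 3 → ℝ) → ℂ) (x : Fin 3 → ℝ) : Fin 3 → ℂ :=
  fun i => pdC i f x

/-!
Multiplying out `eᵢ ∂ᵢF` with the vector–multivector product gives, for `F = α + a`,
`D F = ∇·a + ∇α + *(∇×a)`. For `F = iku + ∇u` this is `Δu + ik∇u + *(∇×∇u)`, and the bivector part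
vanishes by the symmetry of second derivatives of a `C²` function. Comparing with
`ikF = −k²u + ik∇u` leaves only the scalar equation `Δu = −k²u`.
-/

namespace Cl3

theorem smul_mk (c α : ℂ) (a b : Fin 3 → ℂ) (β : ℂ) :
    c • (⟨α, a, b, β⟩ : Cl3) = ⟨c * α, c • a, c • b, c * β⟩ := rfl

theorem add_mk (α α' : ℂ) (a a' b b' : Fin 3 → ℂ) (β β' : ℂ) :
    (⟨α, a, b, β⟩ : Cl3) + ⟨α', a', b', β'⟩ = ⟨α + α', a + a', b + b', β + β'⟩ := rfl

theorem vec_mul (u : Fin 3 → ℝ) (w : Cl3) :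
    vec u * w = ⟨cdot (fun i => (u i : ℂ)) w.a,
      w.α • (fun i => (u i : ℂ)) - ccross (fun i => (u i : ℂ)) w.b,
      ccross (fun i => (u i : ℂ)) w.a + w.β • (fun i => (u i : ℂ)),
      cdot (fun i => (u i : ℂ)) w.b⟩ := by
  change Cl3.mk _ _ _ _ = _
  simp only [vec, Cl3.mk.injEq]
  refine ⟨by simp [cdot], ?_, ?_, by simp [cdot]⟩ <;>
  · ext i; fin_cases i <;> simp [ccross, Matrix.vecHead, Matrix.vecTail]

end Cl3

theorem Dirac_eq (F : (Fin 3 → ℝ) → Cl3) (x : Fin 3 → ℝ) :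
    Dirac F x = ⟨divC (fun y => (F y).a) x,
      gradC (fun y => (F y).α) x - curlC (fun y => (F y).b) x,
      curlC (fun y => (F y).a) x + gradC (fun y => (F y).β) x,
      divC (fun y => (F y).b) x⟩ := by
  simp only [Dirac, Cl3.vec_mul, Cl3.add_mk, Cl3.mk.injEq]
  refine ⟨by simp [cdot, basisVec, pdCl, divC], ?_, ?_, by simp [cdot, basisVec, pdCl, divC]⟩ <;>
  · ext i
    fin_cases i <;>
      simp [ccross, basisVec, pdCl, gradC, curlC, Matrix.vecHead, Matrix.vecTail] <;> ring

theorem pdC_const (i : Fin 3) (c : ℂ) (x : Fin 3 → ℝ) : pdC i (fun _ => c) x = 0 := by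
  simp [pdC]

theorem gradC_const (c : ℂ) (x : Fin 3 → ℝ) : gradC (fun _ => c) x = 0 :=
  funext fun i => pdC_const i c x

theorem divC_const (c : Fin 3 → ℂ) (x : Fin 3 → ℝ) : divC (fun _ => c) x = 0 := by
  simp [divC, pdC_const]

theorem curlC_const (c : Fin 3 → ℂ) (x : Fin 3 → ℝ) : curlC (fun _ => c) x = 0 := by
  ext i; fin_cases i <;> simp [curlC, pdC_const]

theorem pdC_const_mul {u : (Fin 3 → ℝ) → ℂ} {x : Fin 3 → ℝ} (hu : DifferentiableAt ℝ u x)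
    (c : ℂ) (i : Fin 3) : pdC i (fun y => c * u y) x = c * pdC i u x := by
  simp [pdC, fderiv_const_mul hu]

theorem gradC_const_mul {u : (Fin 3 → ℝ) → ℂ} {x : Fin 3 → ℝ} (hu : DifferentiableAt ℝ u x)
    (c : ℂ) : gradC (fun y => c * u y) x = c • gradC u x :=
  funext fun i => pdC_const_mul hu c i

theorem pdC_pdC_eq_fderiv_fderiv {u : (Fin 3 → ℝ) → ℂ} {x : Fin 3 → ℝ}
    (hu : ContDiffAt ℝ 2 u x) (i j : Fin 3) :
    pdC i (pdC j u) x = fderiv ℝ (fderiv ℝ u) x (Pi.single i 1) (Pi.single j 1) := by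
  have hdu : DifferentiableAt ℝ (fderiv ℝ u) x :=
    (hu.fderiv_right (m := 1) (by norm_num)).differentiableAt one_ne_zero
  change fderiv ℝ (fun y => fderiv ℝ u y (Pi.single j 1)) x (Pi.single i 1) = _
  simp [fderiv_clm_apply hdu (differentiableAt_const _)]

theorem pdC_comm {u : (Fin 3 → ℝ) → ℂ} {x : Fin 3 → ℝ} (hu : ContDiffAt ℝ 2 u x)
    (i j : Fin 3) : pdC i (pdC j u) x = pdC j (pdC i u) x := by
  rw [pdC_pdC_eq_fderiv_fderiv hu, pdC_pdC_eq_fderiv_fderiv hu]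
  exact hu.isSymmSndFDerivAt (by simp) _ _

theorem curlC_gradC {u : (Fin 3 → ℝ) → ℂ} {x : Fin 3 → ℝ} (hu : ContDiffAt ℝ 2 u x) :
    curlC (gradC u) x = 0 := by
  ext i
  fin_cases i <;> simp [curlC, gradC, pdC_comm hu 1 2, pdC_comm hu 2 0, pdC_comm hu 0 1]

theorem helmholtz_iff_dirac_general (Ω : Set (Fin 3 → ℝ)) (k : ℂ)
    (u : (Fin 3 → ℝ) → ℂ) (hu : ∀ x ∈ Ω, ContDiffAt ℝ 2 u x) :
    (∀ x ∈ Ω, Dirac (fun y => (⟨Complex.I * k * u y, gradC u y, 0, 0⟩ : Cl3)) x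
        = (Complex.I * k) • (⟨Complex.I * k * u x, gradC u x, 0, 0⟩ : Cl3)) ↔
    (∀ x ∈ Ω, (pdC 0 (fun y => pdC 0 u y) x + pdC 1 (fun y => pdC 1 u y) x
        + pdC 2 (fun y => pdC 2 u y) x) + k ^ 2 * u x = 0) := by
  refine forall₂_congr fun x hx => ?_
  have hu2 := hu x hx
  have hik : Complex.I * k * (Complex.I * k * u x) = -(k ^ 2 * u x) := by
    linear_combination k ^ 2 * u x * Complex.I_sq
  rw [Dirac_eq]
  simp only [gradC_const, divC_const, curlC_const,
    gradC_const_mul (hu2.differentiableAt two_ne_zero), curlC_gradC hu2, sub_zero, add_zero, Cl3.smul_mk, smul_zero, mul_zero, Cl3.mk.injEq, and_true,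
    hik, eq_neg_iff_add_eq_zero]
  rfl -- `divC (gradC u) x` unfolds to the Laplacian as written in the statement

/-- For a `C²` function `u : Ω → ℂ` on an open `Ω ⊆ ℝ³` and `k ∈ ℂ`, the
multivector field `F = iku + ∇u` satisfies `D F = ik F` on `Ω` if and only if
`Δu + k²u = 0` on `Ω`. -/
theorem helmholtz_iff_dirac (Ω : Set (Fin 3 → ℝ)) (hΩ : IsOpen Ω) (k : ℂ)
    (u : (Fin 3 → ℝ) → ℂ) (hu : ∀ x ∈ Ω, ContDiffAt ℝ 2 u x) :
    (∀ x ∈ Ω, Dirac (fun y => (⟨Complex.I * k * u y, gradC u y, 0, 0⟩ : Cl3)) x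
        = (Complex.I * k) • (⟨Complex.I * k * u x, gradC u x, 0, 0⟩ : Cl3)) ↔
    (∀ x ∈ Ω, (pdC 0 (fun y => pdC 0 u y) x + pdC 1 (fun y => pdC 1 u y) x
        + pdC 2 (fun y => pdC 2 u y) x) + k ^ 2 * u x = 0) :=
  helmholtz_iff_dirac_general Ω k u hu
end
end

section
/- Let H be a complex vector space and N, S : H → H linear involutions with NS = −SN. Let g ∈ H satisfy Ng = g, and suppose range(N⁺) ∩ range(S⁻) = {0}, where N⁺ = ½(I+N), S⁻ = ½(I−S). Let C : H → H be a linear involution and C± = ½(I±C). Then for f ∈ H: the equation (N⁺C⁻ − S⁻C⁺)f = g holds if and only if (I − (N + S + SN)C)f = 2(I + S)g. -/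
/-- Theorem 4.3 (abstract form). Let `N, S, C` be linear involutions on a
complex vector space `H` with `NS = −SN`, let `g ∈ H` satisfy `Ng = g`, and
suppose the ranges of `N⁺ = ½(I+N)` and `S⁻ = ½(I−S)` intersect trivially.
Then for `f ∈ H`, `(N⁺C⁻ − S⁻C⁺)f = g` holds if and only if
`(I − (N + S + SN)C)f = 2(I + S)g`. -/
theorem spin_integral_equation_equivalence
    (H : Type*) [AddCommGroup H] [Module ℂ H]
    (N S C : H →ₗ[ℂ] H)
    (hN : ∀ h, N (N h) = h) (hS : ∀ h, S (S h) = h) (hC : ∀ h, C (C h) = h)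
    (hNS : ∀ h, N (S h) + S (N h) = 0)
    (g : H) (hg : N g = g)
    (htriv : Set.range (fun h => (1 / 2 : ℂ) • (h + N h)) ∩
        Set.range (fun h => (1 / 2 : ℂ) • (h - S h)) = {0})
    (f : H) :
    ((1 / 2 : ℂ) • (((1 / 2 : ℂ) • (f - C f)) + N ((1 / 2 : ℂ) • (f - C f)))
        - (1 / 2 : ℂ) • (((1 / 2 : ℂ) • (f + C f)) - S ((1 / 2 : ℂ) • (f + C f)))
      = g) ↔
    (f - (N (C f) + S (C f) + S (N (C f))) = (2 : ℂ) • (g + S g)) := by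
  have hNS' : ∀ h, N (S h) = -(S (N h)) := fun h =>
    eq_neg_of_add_eq_zero_left (hNS h)
  set u : H := (1 / 2 : ℂ) • (((1 / 2 : ℂ) • (f - C f)) +
      N ((1 / 2 : ℂ) • (f - C f))) with hu_def
  set v : H := (1 / 2 : ℂ) • (((1 / 2 : ℂ) • (f + C f)) -
      S ((1 / 2 : ℂ) • (f + C f))) with hv_def
  constructor
  · intro h
    -- N fixes u, hence also v = u - g
    have hNu : N u = u := by
      simp only [hu_def, map_smul, map_add, map_sub, hN]
      module
    have hNv : N v = v := by
      have : v = u - g := by rw [← h]; abel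
      rw [this, map_sub, hNu, hg]
    -- v lies in both ranges, hence v = 0
    have hv0 : v = 0 := by
      have hmem : v ∈ Set.range (fun h => (1 / 2 : ℂ) • (h + N h)) ∩
          Set.range (fun h => (1 / 2 : ℂ) • (h - S h)) := by
        constructor
        · exact ⟨v, show (1 / 2 : ℂ) • (v + N v) = v by rw [hNv]; module⟩
        · exact ⟨(1 / 2 : ℂ) • (f + C f), rfl⟩
      rw [htriv] at hmem
      exact hmem
    have hA : u = g := by rw [← h, hv0]; abel
    have hB : v = 0 := hv0
    have hSA := congrArg S hA
    have hNB := congrArg N hB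
    rw [hu_def] at hA hSA
    rw [hv_def] at hB hNB
    simp only [map_smul, map_add, map_sub, map_zero, hN, hS, hNS'] at hA hB hSA hNB
    linear_combination (norm := module) (2 : ℂ) • hA + (2 : ℂ) • hB +
      (2 : ℂ) • hSA - (2 : ℂ) • hNB
  · intro h
    have hNE := congrArg N h
    have hSE := congrArg S h
    simp only [map_smul, map_add, map_sub, hN, hS, hNS', hg] at hNE hSE
    rw [hu_def, hv_def]
    simp only [map_smul, map_add, map_sub]
    linear_combination (norm := module) (1 / 4 : ℂ) • hNE + (1 / 4 : ℂ) • hSE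
end
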